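/- arXiv:2403.08921 — 2 statements merged into one kernel-verified Lean document; each statement's English description precedes it below -/
import Mathlib

section
/- For any ε > 0 there exists d₀ = d₀(ε) ≥ 1 such that for all d ≥ d₀ and all β with 0 < β ≤ (1−ε)·β_c(d) the following holds: for G = G(n,d/n) equipped with the Edwards–Anderson model at inverse temperature β, and any fixed vertex u of G, the aggregate influence satisfies Pr[Λ(u) ≥ E[Λ(u)] + ε/2] ≤ exp(−(ε⁴/(8π))·d), where the probability and expectation are over both the random degree of u and the Gaussian couplings on its incident edges. -/
open MeasureTheory ProbabilityTheory Real
open scoped Classical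

noncomputable section

namespace EA

/-- Spin configurations. -/
abbrev Config (V : Type*) := V → Bool

/-- The critical inverse temperature `β_c(k) = √(2π)/k`. -/
def betaC (k : ℝ) : ℝ := Real.sqrt (2 * Real.pi) / k

/-- The influence of an edge carrying coupling `x`, at inverse temperature `β`. -/
def influence (β x : ℝ) : ℝ := |1 - Real.exp (β * x)| / (1 + Real.exp (β * x))

variable {V : Type*} [Fintype V] [DecidableEq V]

/-- The aggregate influence `Λ(u) = ∑_{z ∼ u} Γ_{{u,z}}`. -/
def aggInfluence (G : SimpleGraph V) (β : ℝ) (J : V → V → ℝ) (u : V) : ℝ :=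
  ∑ z ∈ G.neighborFinset u, influence β (J u z)

/-- The `(d,ε)` vertex weight `M(u)`. -/
def vertexWeight (d ε : ℝ) (G : SimpleGraph V) (β : ℝ) (J : V → V → ℝ) (u : V) : ℝ :=
  if aggInfluence G β J u ≤ 1 - ε / 2 then 1 - ε / 4 else d * aggInfluence G β J u

/-- The `(d,ε)` weight of a path: product of the weights of its vertices. -/
def walkWeight (d ε : ℝ) (G : SimpleGraph V) (β : ℝ) (J : V → V → ℝ) {u w : V}
    (p : G.Walk u w) : ℝ :=
  (p.support.map (vertexWeight d ε G β J)).prod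

/-- `u` is a `(d,ε)`-block vertex of range `k`: every path of length at most `k`
emanating from `u` has weight `< 1`. -/
def IsBlockVertexOfRange (d ε : ℝ) (G : SimpleGraph V) (β : ℝ) (J : V → V → ℝ)
    (k : ℝ) (u : V) : Prop :=
  ∀ (w : V) (p : G.Walk u w), p.IsPath → (p.length : ℝ) ≤ k → walkWeight d ε G β J p < 1

/-- `u` is a `(d,ε)`-block vertex: every path of length at most `log n`
emanating from `u` has weight `< 1`. -/
def IsBlockVertex (n : ℕ) (d ε : ℝ) (G : SimpleGraph V) (β : ℝ) (J : V → V → ℝ) (u : V) : Prop :=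
  IsBlockVertexOfRange d ε G β J (Real.log n) u

/-- Unnormalised Gibbs weight `exp(β ∑_{x∼y} 1{σx=σy} J_{xy})`
(each edge counted once, hence the factor `1/2` for the double sum). -/
def gibbsWeight (G : SimpleGraph V) (β : ℝ) (J : V → V → ℝ) (σ : Config V) : ℝ :=
  Real.exp (β / 2 * ∑ x : V, ∑ y : V, if G.Adj x y ∧ σ x = σ y then J x y else 0)

/-- The Gibbs distribution `μ_{G,J,β}`. -/
def gibbs (G : SimpleGraph V) (β : ℝ) (J : V → V → ℝ) (σ : Config V) : ℝ :=
  gibbsWeight G β J σ / ∑ τ : Config V, gibbsWeight G β J τ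

/-- Transition matrix of the single-site Glauber dynamics for `μ_{G,J,β}`. -/
def glauberP (G : SimpleGraph V) (β : ℝ) (J : V → V → ℝ) :
    Matrix (Config V) (Config V) ℝ := fun σ τ =>
  (Fintype.card V : ℝ)⁻¹ * ∑ v : V,
    if ∀ w, w ≠ v → τ w = σ w then
      gibbsWeight G β J τ /
        (gibbsWeight G β J (Function.update σ v true) +
          gibbsWeight G β J (Function.update σ v false))
    else 0

/-- Total variation distance between two distributions on a finite set. -/
def tvDist {α : Type*} [Fintype α] (p q : α → ℝ) : ℝ := (∑ x, |p x - q x|) / 2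

/-- Mixing time: `max_σ min { t > 0 : ‖P^t(σ,·) − π‖_TV ≤ 1/e }`. -/
def mixingTime {α : Type*} [Fintype α] [DecidableEq α] (P : Matrix α α ℝ) (stat : α → ℝ) : ℕ :=
  Finset.univ.sup fun σ : α =>
    sInf {t : ℕ | 0 < t ∧ tvDist (fun τ => (P ^ t) σ τ) stat ≤ (Real.exp 1)⁻¹}

/-- The second largest absolute value of an eigenvalue of `P`. -/
def secondEigenAbs {α : Type*} [Fintype α] [DecidableEq α] (P : Matrix α α ℝ) : ℝ :=
  sSup {ρ : ℝ | ∃ x : ℝ, x ≠ 1 ∧ Module.End.HasEigenvalue (Matrix.toLin' P) x ∧ ρ = |x|}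

/-- The relaxation time `1/(1 − λ*)`. -/
def relaxTime {α : Type*} [Fintype α] [DecidableEq α] (P : Matrix α α ℝ) : ℝ :=
  1 / (1 - secondEigenAbs P)

/-! ### The random graph `G(n, d/n)` together with i.i.d. standard Gaussian couplings -/

/-- The graph determined by edge indicators `η`. -/
def graphOf {n : ℕ} (η : Sym2 (Fin n) → Bool) : SimpleGraph (Fin n) where
  Adj u v := u ≠ v ∧ η s(u, v) = true
  symm := ⟨fun u v h => ⟨h.1.symm, by rw [Sym2.eq_swap]; exact h.2⟩⟩
  loopless := ⟨fun u h => h.1 rfl⟩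

/-- Bernoulli measure on `Bool` with success probability `p`. -/
def bernoulliBool (p : ℝ) : Measure Bool :=
  (PMF.bernoulli (min (Real.toNNReal p) 1) (min_le_right _ _)).toMeasure

/-- The joint law of the Erdős–Rényi graph `G(n,d/n)` and of the i.i.d. standard
Gaussian couplings of the Edwards–Anderson model on it. -/
def eaMeasure (n : ℕ) (d : ℝ) : Measure ((Sym2 (Fin n) → Bool) × (Sym2 (Fin n) → ℝ)) :=
  (Measure.pi fun _ => bernoulliBool (d / n)).prod (Measure.pi fun _ => gaussianReal 0 1)

/-- Couplings indexed by unordered pairs, as a symmetric two-argument function. -/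
def coupOf {n : ℕ} (Jc : Sym2 (Fin n) → ℝ) : Fin n → Fin n → ℝ := fun u v => Jc s(u, v)

/-! ### Block partitions -/

/-- The outer boundary `∂_out B`. -/
def outBoundary (G : SimpleGraph V) (B : Finset V) : Finset V :=
  Finset.univ.filter fun w => w ∉ B ∧ ∃ v ∈ B, G.Adj w v

/-- The number of edges of `G` spanned by the vertex set `B`. -/
def spanEdgeCount (G : SimpleGraph V) (B : Finset V) : ℕ :=
  (Finset.univ.filter fun e : Sym2 V => e ∈ G.edgeSet ∧ ∀ v ∈ e, v ∈ B).card

/-- A `(d,ε)`-block partition. -/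
structure IsBlockPartition (n : ℕ) (d ε : ℝ) (G : SimpleGraph V) (β : ℝ)
    (J : V → V → ℝ) (Bs : Finset (Finset V)) : Prop where
  nonempty : ∀ B ∈ Bs, B.Nonempty
  disj : ∀ B ∈ Bs, ∀ B' ∈ Bs, B ≠ B' → Disjoint B B'
  covers : ∀ v : V, ∃ B ∈ Bs, v ∈ B
  connected : ∀ B ∈ Bs, (G.induce (B : Set V)).Connected
  unicyclic : ∀ B ∈ Bs, spanEdgeCount G B ≤ B.card
  boundary_block : ∀ B ∈ Bs, 2 ≤ B.card → ∀ w ∈ outBoundary G B, IsBlockVertex n d ε G β J w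
  boundary_unique : ∀ B ∈ Bs, 2 ≤ B.card → ∀ w ∈ outBoundary G B,
    (G.neighborFinset w ∩ B).card = 1
  cycle_short : ∀ B ∈ Bs, 2 ≤ B.card → ∀ (v : V) (c : G.Walk v v), c.IsCycle →
    (∀ x ∈ c.support, x ∈ B) → (c.length : ℝ) ≤ 4 * Real.log n / (Real.log d) ^ 4
  cycle_far : ∀ B ∈ Bs, 2 ≤ B.card → ∀ (v : V) (c : G.Walk v v), c.IsCycle →
    (∀ x ∈ c.support, x ∈ B) → ∀ x ∈ c.support, ∀ w ∈ outBoundary G B,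
      (Real.log d) ^ 5 ≤ (G.dist x w : ℝ)
  singleton_block : ∀ B ∈ Bs, B.card = 1 → ∀ v ∈ B, IsBlockVertex n d ε G β J v

/-- The path weight `Υ(P) = β ∑_{e incident to P} |J_e| + ∑_{v ∈ P} log deg(v)`. -/
def upsilon (G : SimpleGraph V) (β : ℝ) (J : V → V → ℝ) {u w : V} (p : G.Walk u w) : ℝ :=
  β * (2⁻¹ * ∑ x : V, ∑ y : V,
      if G.Adj x y ∧ (x ∈ p.support ∨ y ∈ p.support) then |J x y| else 0) +
    (p.support.map fun v => Real.log (G.degree v)).sum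

/-- Membership of the triplet `(G,J,β)` in the good set `𝒢(d,ε)`. -/
def InGoodSet (n : ℕ) (d ε β : ℝ) (G : SimpleGraph V) (J : V → V → ℝ) : Prop :=
  (0 < β ∧ β ≤ (1 - ε) * betaC d) ∧
  (∃ Bs : Finset (Finset V), IsBlockPartition n d ε G β J Bs) ∧
  (∀ (u w : V) (p : G.Walk u w), p.IsPath → (p.length : ℝ) ≤ Real.log n / (Real.log d) ^ 4 →
    upsilon G β J p ≤ Real.log n / (Real.log d) ^ 2) ∧
  (∀ u v : V, G.Adj u v →
    (n : ℝ) ^ (-(7 / 3 : ℝ)) ≤ |J u v| ∧ |J u v| ≤ 10 * Real.sqrt (Real.log n))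

/-! ### Block dynamics -/

/-- Transition matrix of the block dynamics for `μ_{G,J,β}` with blocks `Bs`. -/
def blockP (G : SimpleGraph V) (β : ℝ) (J : V → V → ℝ) (Bs : Finset (Finset V)) :
    Matrix (Config V) (Config V) ℝ := fun σ τ =>
  (Bs.card : ℝ)⁻¹ * ∑ B ∈ Bs,
    if ∀ w ∉ B, τ w = σ w then
      gibbsWeight G β J τ /
        ∑ τ' ∈ Finset.univ.filter (fun τ' : Config V => ∀ w ∉ B, τ' w = σ w),
          gibbsWeight G β J τ'
    else 0

/-- The update kernel that resamples the block `B` from the conditional Gibbs marginal. -/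
def blockKernel (G : SimpleGraph V) (β : ℝ) (J : V → V → ℝ) (B : Finset V)
    (σ τ : Config V) : ℝ :=
  if ∀ w ∉ B, τ w = σ w then
    gibbsWeight G β J τ /
      ∑ τ' ∈ Finset.univ.filter (fun τ' : Config V => ∀ w ∉ B, τ' w = σ w),
        gibbsWeight G β J τ'
  else 0

/-- `Λ_out(z)`: the aggregate influence of `z` on its neighbours outside its own block. -/
def aggInfluenceOut (G : SimpleGraph V) (β : ℝ) (J : V → V → ℝ) (Bs : Finset (Finset V))
    (z : V) : ℝ :=
  ∑ w ∈ G.neighborFinset z, if ∃ B ∈ Bs, z ∈ B ∧ w ∈ B then 0 else influence β (J z w)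

/-- The path-coupling distance metric used for block dynamics. -/
def pcDist (G : SimpleGraph V) (β : ℝ) (J : V → V → ℝ) (Bs : Finset (Finset V))
    (σ τ : Config V) : ℝ :=
  ∑ z : V, if σ z ≠ τ z then
      (if 0 < aggInfluenceOut G β J Bs z then
        (Fintype.card V : ℝ) ^ 4 * aggInfluenceOut G β J Bs z else 1)
    else 0

/-! ### Dynamics with boundary conditions -/

/-- Single-site Glauber dynamics on a block `B` with boundary condition `bc` on `∂_out B`. -/
def glauberOnP (G : SimpleGraph V) (β : ℝ) (J : V → V → ℝ) (B : Finset V) (bc : Config V) :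
    Matrix {τ : Config V // ∀ w, w ∉ B → τ w = bc w}
      {τ : Config V // ∀ w, w ∉ B → τ w = bc w} ℝ := fun σ τ =>
  (B.card : ℝ)⁻¹ * ∑ v ∈ B,
    if ∀ w, w ≠ v → (τ : Config V) w = (σ : Config V) w then
      gibbsWeight G β J (τ : Config V) /
        (gibbsWeight G β J (Function.update (σ : Config V) v true) +
          gibbsWeight G β J (Function.update (σ : Config V) v false))
    else 0

/-- Block dynamics on a subgraph `S` with blocks `blocks` and boundary condition `bc`. -/
def blockOnP (G : SimpleGraph V) (β : ℝ) (J : V → V → ℝ) (S : Finset V)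
    (blocks : Finset (Finset V)) (bc : Config V) :
    Matrix {τ : Config V // ∀ w, w ∉ S → τ w = bc w}
      {τ : Config V // ∀ w, w ∉ S → τ w = bc w} ℝ := fun σ τ =>
  (blocks.card : ℝ)⁻¹ * ∑ B ∈ blocks,
    if ∀ w ∉ B, (τ : Config V) w = (σ : Config V) w then
      gibbsWeight G β J (τ : Config V) /
        ∑ τ' ∈ Finset.univ.filter (fun τ' : Config V => ∀ w ∉ B, τ' w = (σ : Config V) w),
          gibbsWeight G β J τ'
    else 0

/-! ### The collection of trees 𝒯 associated with a block partition -/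

/-- `(S, v)` is a rooted tree of the collection `𝒯(ℬ)`. -/
def InTreeColl (n : ℕ) (d ε : ℝ) (G : SimpleGraph V) (β : ℝ) (J : V → V → ℝ)
    (Bs : Finset (Finset V)) (S : Finset V) (v : V) : Prop :=
  (∃ B ∈ Bs, 2 ≤ B.card ∧ spanEdgeCount G B < B.card ∧ S = B ∪ outBoundary G B ∧
    v ∈ B ∧ 1 - ε / 2 < aggInfluence G β J v) ∨
  (∃ B ∈ Bs, ∃ (w : V) (c : G.Walk w w), c.IsCycle ∧ (∀ x ∈ c.support, x ∈ B) ∧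
    v ∈ c.support ∧
    S = (B ∪ outBoundary G B).filter fun x =>
      ∃ p : (G.deleteEdges {e | e ∈ c.edges}).Walk v x, ∀ y ∈ p.support, y ∈ B ∪ outBoundary G B)

/-- `m(T,v)`: the maximum of `Υ(P)` over all root-to-leaf paths of the tree with
vertex set `S` rooted at `v`. -/
def mTree (G : SimpleGraph V) (β : ℝ) (J : V → V → ℝ) (S : Finset V) (v : V) : ℝ :=
  sSup {x : ℝ | ∃ (w : V) (p : G.Walk v w), p.IsPath ∧ (∀ y ∈ p.support, y ∈ S) ∧
    (G.neighborFinset w ∩ S).card ≤ 1 ∧ x = upsilon G β J p}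

/-- The subtree `T_u` of the tree with vertex set `S` rooted at `v`, consisting of
`u` together with all of its descendants. -/
def subtreeAt (G : SimpleGraph V) (S : Finset V) (v u : V) : Finset V :=
  S.filter fun w => ∀ p : G.Walk v w, p.IsPath → (∀ y ∈ p.support, y ∈ S) → u ∈ p.support

/-! ### Locally simple paths -/

/-- `N_r(P)`: the set of vertices reachable from the path `p` by a path of length at most `r`. -/
def NrSet (G : SimpleGraph V) {u w : V} (p : G.Walk u w) (r : ℝ) : Set V :=
  {x | ∃ y ∈ p.support, ∃ q : G.Walk y x, (q.length : ℝ) ≤ r}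

/-!
Given the vertex `u`, the aggregate influence is a sum of `n - 1` independent copies of
`Y = 1{edge present} · Γ(J)` with `Y ∈ [0, 1]`, an edge being present with probability `p = d / n`
and `J` standard Gaussian. The Chernoff bound therefore controls the upper tail by
`exp (∑ (E e^{tY} - 1 - t E Y) - t ε / 2)`, and every summand equals `p · E (e^{tΓ} - 1 - tΓ)`.
As `Γ ≤ β |J|`, the elementary bound `e^s - 1 - s ≤ s² e^s` together with the Gaussian
moment generating function gives `E (e^{tΓ} - 1 - tΓ) ≤ 4 A²` whenever `tβ ≤ A ≤ 1/8`. Since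
`β ≤ (1 - ε) β_c(d)`, the choice `t = A / ((1 - ε) β_c(d))` makes the exponent at most
`d · (4 A² - A ε / (2 (1 - ε) √(2π)))`, and optimising over `A ≤ 1/8` yields `-ε⁴ d / (8π)`.
-/

theorem exp_sub_one_le_mul_exp (s : ℝ) : exp s - 1 ≤ s * exp s := by
  have h := mul_le_mul_of_nonneg_right (one_sub_le_exp_neg s) (exp_pos s).le
  rw [← exp_add, neg_add_cancel, exp_zero] at h
  linarith

theorem exp_sub_one_sub_le_sq_mul_exp {s : ℝ} (hs : 0 ≤ s) : exp s - 1 - s ≤ s ^ 2 * exp s := by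
  nlinarith [exp_sub_one_le_mul_exp s, mul_le_mul_of_nonneg_left (exp_sub_one_le_mul_exp s) hs]

theorem sq_le_exp_of_nonneg {w : ℝ} (hw : 0 ≤ w) : w ^ 2 ≤ exp w := by
  have h := sum_le_exp_of_nonneg hw 4
  norm_num [Finset.sum_range_succ, Nat.factorial] at h
  nlinarith [mul_nonneg hw (sq_nonneg (w - 3 / 2))]

theorem influence_nonneg (β x : ℝ) : 0 ≤ influence β x := by
  unfold influence; positivity

theorem influence_le_one (β x : ℝ) : influence β x ≤ 1 := by
  rw [influence, div_le_one (by positivity)]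
  cases abs_cases (1 - exp (β * x)) <;> nlinarith [exp_pos (β * x)]

theorem influence_le_abs_mul (β x : ℝ) : influence β x ≤ |β * x| := by
  rw [influence, div_le_iff₀ (by positivity)]
  set y := β * x
  rcases le_or_gt 0 y with hy | hy
  · rw [abs_of_nonpos (by linarith [one_le_exp hy]), abs_of_nonneg hy]
    linarith [exp_sub_one_le_mul_exp y]
  · rw [abs_of_nonneg (by linarith [exp_lt_one_iff.2 hy]), abs_of_neg hy]
    nlinarith [add_one_le_exp y, exp_pos y]

theorem continuous_influence (β : ℝ) : Continuous (influence β) := by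
  unfold influence
  exact Continuous.div (by fun_prop) (by fun_prop) fun x => by positivity

theorem integral_exp_mul_gaussianReal (s : ℝ) :
    ∫ x, exp (s * x) ∂gaussianReal 0 1 = exp (s ^ 2 / 2) := by
  simpa [mgf] using congrFun (mgf_id_gaussianReal (μ := 0) (v := 1)) s

theorem exp_mul_abs_le (s x : ℝ) : exp (s * |x|) ≤ exp (s * x) + exp (-s * x) := by
  rcases abs_cases x with ⟨h, _⟩ | ⟨h, _⟩ <;> rw [h]
  · linarith [exp_pos (-s * x)]
  · rw [mul_neg, ← neg_mul]; linarith [exp_pos (s * x)]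

theorem integrable_exp_mul_abs_gaussianReal (s : ℝ) :
    Integrable (fun x => exp (s * |x|)) (gaussianReal 0 1) :=
  ((integrable_exp_mul_gaussianReal s).add (integrable_exp_mul_gaussianReal (-s))).mono'
    (by fun_prop) (ae_of_all _ fun x => by
      rw [norm_of_nonneg (exp_pos _).le]; exact exp_mul_abs_le s x)

theorem integral_exp_mul_abs_gaussianReal_le (s : ℝ) :
    ∫ x, exp (s * |x|) ∂gaussianReal 0 1 ≤ 2 * exp (s ^ 2 / 2) := by
  calc ∫ x, exp (s * |x|) ∂gaussianReal 0 1
      ≤ ∫ x, (exp (s * x) + exp (-s * x)) ∂gaussianReal 0 1 :=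
        integral_mono (integrable_exp_mul_abs_gaussianReal s)
          ((integrable_exp_mul_gaussianReal s).add (integrable_exp_mul_gaussianReal (-s)))
          (exp_mul_abs_le s)
    _ = 2 * exp (s ^ 2 / 2) := by
        rw [integral_add (integrable_exp_mul_gaussianReal s) (integrable_exp_mul_gaussianReal _),
          integral_exp_mul_gaussianReal, integral_exp_mul_gaussianReal, neg_sq]
        ring

theorem exp_mul_influence_sub_le {β t A : ℝ} (ht : 0 ≤ t) (hA : t * |β| ≤ A) (x : ℝ) :
    exp (t * influence β x) - 1 - t * influence β x ≤ A ^ 2 * exp ((1 + A) * |x|) := by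
  set s := t * influence β x
  have hs0 : 0 ≤ s := mul_nonneg ht (influence_nonneg β x)
  have hsA : s ≤ A * |x| :=
    calc s ≤ t * (|β| * |x|) := by
          rw [← abs_mul]; exact mul_le_mul_of_nonneg_left (influence_le_abs_mul β x) ht
      _ ≤ A * |x| := by rw [← mul_assoc]; exact mul_le_mul_of_nonneg_right hA (abs_nonneg x)
  calc exp s - 1 - s ≤ s ^ 2 * exp s := exp_sub_one_sub_le_sq_mul_exp hs0
    _ ≤ A ^ 2 * |x| ^ 2 * exp (A * |x|) := by
        rw [← mul_pow]; gcongr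
    _ ≤ A ^ 2 * exp |x| * exp (A * |x|) := by
        gcongr; exact sq_le_exp_of_nonneg (abs_nonneg x)
    _ = A ^ 2 * exp ((1 + A) * |x|) := by
        rw [mul_assoc, ← exp_add]; ring_nf

theorem integrable_influence (β : ℝ) : Integrable (influence β) (gaussianReal 0 1) :=
  Integrable.of_bound (continuous_influence β).aestronglyMeasurable 1
    (ae_of_all _ fun x => by
      rw [norm_of_nonneg (influence_nonneg β x)]; exact influence_le_one β x)

theorem integrable_exp_mul_influence (β t : ℝ) :
    Integrable (fun x => exp (t * influence β x)) (gaussianReal 0 1) :=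
  Integrable.of_bound ((continuous_const.mul (continuous_influence β)).rexp.aestronglyMeasurable)
    (exp |t|) (ae_of_all _ fun x => by
      rw [norm_of_nonneg (exp_pos _).le, exp_le_exp]
      calc t * influence β x ≤ |t| * influence β x :=
            mul_le_mul_of_nonneg_right (le_abs_self t) (influence_nonneg β x)
        _ ≤ |t| := mul_le_of_le_one_right (abs_nonneg t) (influence_le_one β x))

theorem integral_exp_mul_influence_sub_le {β t A : ℝ} (ht : 0 ≤ t) (hA : t * |β| ≤ A)
    (hA8 : A ≤ 1 / 8) :
    ∫ x, exp (t * influence β x) ∂gaussianReal 0 1 - 1 - t * ∫ x, influence β x ∂gaussianReal 0 1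
      ≤ 4 * A ^ 2 := by
  have hA0 : 0 ≤ A := le_trans (by positivity) hA
  have hexp : exp ((1 + A) ^ 2 / 2) ≤ 2 := by
    rw [← le_log_iff_exp_le two_pos]
    nlinarith [log_two_gt_d9]
  have hexp_sub : Integrable (fun x => exp (t * influence β x) - 1) (gaussianReal 0 1) :=
    (integrable_exp_mul_influence β t).sub (integrable_const 1)
  calc ∫ x, exp (t * influence β x) ∂gaussianReal 0 1 - 1 - t * ∫ x, influence β x ∂gaussianReal 0 1
      = ∫ x, (exp (t * influence β x) - 1 - t * influence β x) ∂gaussianReal 0 1 := by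
        rw [integral_sub hexp_sub ((integrable_influence β).const_mul t),
          integral_sub (integrable_exp_mul_influence β t) (integrable_const 1),
          integral_const_mul, integral_const, probReal_univ, one_smul]
    _ ≤ ∫ x, A ^ 2 * exp ((1 + A) * |x|) ∂gaussianReal 0 1 := by
        exact integral_mono (hexp_sub.sub ((integrable_influence β).const_mul t))
          ((integrable_exp_mul_abs_gaussianReal _).const_mul _) (exp_mul_influence_sub_le ht hA)
    _ = A ^ 2 * ∫ x, exp ((1 + A) * |x|) ∂gaussianReal 0 1 := integral_const_mul _ _
    _ ≤ A ^ 2 * (2 * 2) := by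
        gcongr
        exact (integral_exp_mul_abs_gaussianReal_le _).trans (by linarith)
    _ = 4 * A ^ 2 := by ring

theorem measureReal_sum_ge_le_exp {Ω ι : Type*} {mΩ : MeasurableSpace Ω} {μ : Measure Ω}
    {Y : ι → Ω → ℝ} (hind : iIndepFun Y μ) (hmeas : ∀ i, Measurable (Y i))
    (hint : ∀ i, Integrable (Y i) μ) {t : ℝ} (ht : 0 ≤ t)
    (hexp : ∀ i, Integrable (fun ω => exp (t * Y i ω)) μ) (s : Finset ι) (a : ℝ) :
    μ.real {ω | μ[∑ i ∈ s, Y i] + a ≤ (∑ i ∈ s, Y i) ω}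
      ≤ exp (∑ i ∈ s, (mgf (Y i) μ t - 1 - t * μ[Y i]) - t * a) := by
  have := hind.isProbabilityMeasure
  have hmean : μ[∑ i ∈ s, Y i] = ∑ i ∈ s, μ[Y i] := by
    simp_rw [Finset.sum_apply]; exact integral_finsetSum s fun i _ => hint i
  calc μ.real {ω | μ[∑ i ∈ s, Y i] + a ≤ (∑ i ∈ s, Y i) ω}
      ≤ exp (-t * (μ[∑ i ∈ s, Y i] + a)) * mgf (∑ i ∈ s, Y i) μ t :=
        measure_ge_le_exp_mul_mgf _ ht (hind.integrable_exp_mul_sum hmeas fun i _ => hexp i)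
    _ = exp (-t * (∑ i ∈ s, μ[Y i] + a)) * ∏ i ∈ s, mgf (Y i) μ t := by
        rw [hind.mgf_sum hmeas, hmean]
    _ ≤ exp (-t * (∑ i ∈ s, μ[Y i] + a)) * ∏ i ∈ s, exp (mgf (Y i) μ t - 1) := by
        gcongr with i
        · exact fun i _ => mgf_nonneg
        · linarith [add_one_le_exp (mgf (Y i) μ t - 1)]
    _ = exp (∑ i ∈ s, (mgf (Y i) μ t - 1 - t * μ[Y i]) - t * a) := by
        rw [← exp_sum, ← exp_add]
        congr 1
        simp only [Finset.sum_sub_distrib, ← Finset.mul_sum]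
        ring

section PairCoordinates

variable {ι α γ : Type*} [Fintype ι] [MeasurableSpace α] [MeasurableSpace γ]
  {μ : Measure α} {ν : Measure γ} [IsProbabilityMeasure μ] [IsProbabilityMeasure ν]

theorem measurePreserving_pairEval (i : ι) :
    MeasurePreserving (fun ω : (ι → α) × (ι → γ) => (ω.1 i, ω.2 i))
      ((Measure.pi fun _ => μ).prod (Measure.pi fun _ => ν)) (μ.prod ν) :=
  (measurePreserving_eval (μ := fun _ : ι => μ.prod ν) i).comp
    (measurePreserving_arrowProdEquivProdArrow α γ ι (fun _ => μ) (fun _ => ν)).symm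

theorem iIndepFun_pairEval :
    iIndepFun (fun i (ω : (ι → α) × (ι → γ)) => (ω.1 i, ω.2 i))
      ((Measure.pi fun _ => μ).prod (Measure.pi fun _ => ν)) := by
  rw [iIndepFun_iff_map_fun_eq_pi_map
    fun i => (measurePreserving_pairEval (μ := μ) (ν := ν) i).measurable.aemeasurable]
  simp_rw [(measurePreserving_pairEval _).map_eq]
  exact (measurePreserving_arrowProdEquivProdArrow α γ ι (fun _ => μ) (fun _ => ν)).symm.map_eq

end PairCoordinates

instance isProbabilityMeasure_bernoulliBool (p : ℝ) : IsProbabilityMeasure (bernoulliBool p) :=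
  PMF.toMeasure.isProbabilityMeasure _

instance isProbabilityMeasure_eaMeasure (n : ℕ) (d : ℝ) : IsProbabilityMeasure (eaMeasure n d) := by
  unfold eaMeasure; infer_instance

theorem integral_bernoulliBool {p : ℝ} (hp0 : 0 ≤ p) (hp1 : p ≤ 1) (g : Bool → ℝ) :
    ∫ b, g b ∂bernoulliBool p = p * g true + (1 - p) * g false := by
  rw [bernoulliBool, PMF.integral_eq_sum, Fintype.sum_bool]
  simp [PMF.bernoulli, hp0, hp1]

theorem integral_bernoulliBool_prod {γ : Type*} [MeasurableSpace γ] {ν : Measure γ}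
    [SFinite ν] {p : ℝ} (hp0 : 0 ≤ p) (hp1 : p ≤ 1) {g : Bool × γ → ℝ}
    (hg : Integrable g ((bernoulliBool p).prod ν)) :
    ∫ q, g q ∂(bernoulliBool p).prod ν
      = p * ∫ x, g (true, x) ∂ν + (1 - p) * ∫ x, g (false, x) ∂ν := by
  rw [integral_prod g hg, integral_bernoulliBool hp0 hp1]

/-- The contribution to `Λ(u)` of a potential edge `q = (present?, coupling)`. -/
def edgeInfluence (β : ℝ) (q : Bool × ℝ) : ℝ := if q.1 then influence β q.2 else 0

theorem edgeInfluence_nonneg (β : ℝ) (q : Bool × ℝ) : 0 ≤ edgeInfluence β q := by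
  unfold edgeInfluence; split_ifs
  exacts [influence_nonneg β q.2, le_rfl]

theorem edgeInfluence_le_one (β : ℝ) (q : Bool × ℝ) : edgeInfluence β q ≤ 1 := by
  unfold edgeInfluence; split_ifs
  exacts [influence_le_one β q.2, zero_le_one]

theorem measurable_edgeInfluence (β : ℝ) : Measurable (edgeInfluence β) :=
  Measurable.ite (measurable_fst (measurableSet_singleton true))
    ((continuous_influence β).measurable.comp measurable_snd) measurable_const

theorem aggInfluence_graphOf {n : ℕ} (η : Sym2 (Fin n) → Bool) (J : Sym2 (Fin n) → ℝ) (β : ℝ)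
    (u : Fin n) :
    aggInfluence (graphOf η) β (coupOf J) u
      = ∑ z ∈ Finset.univ.erase u, edgeInfluence β (η s(u, z), J s(u, z)) := by
  have hnbr : (graphOf η).neighborFinset u = (Finset.univ.erase u).filter (η s(u, ·)) := by
    ext z
    simp only [SimpleGraph.mem_neighborFinset, Finset.mem_filter, Finset.mem_erase,
      Finset.mem_univ, and_true]
    exact and_congr_left' ne_comm
  rw [aggInfluence, hnbr, Finset.sum_filter]
  rfl

section EdgeInfluenceIntegrability

variable {Ω : Type*} [MeasurableSpace Ω] {μ : Measure Ω} [IsFiniteMeasure μ] {f : Ω → Bool × ℝ}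

theorem integrable_edgeInfluence_comp (hf : Measurable f) (β : ℝ) :
    Integrable (fun ω => edgeInfluence β (f ω)) μ :=
  Integrable.of_bound ((measurable_edgeInfluence β).comp hf).aestronglyMeasurable 1
    (ae_of_all _ fun ω => by
      rw [norm_of_nonneg (edgeInfluence_nonneg β _)]; exact edgeInfluence_le_one β _)

theorem integrable_exp_mul_edgeInfluence_comp (hf : Measurable f) (β t : ℝ) :
    Integrable (fun ω => exp (t * edgeInfluence β (f ω))) μ :=
  Integrable.of_bound
    (((measurable_edgeInfluence β).comp hf).const_mul t).exp.aestronglyMeasurable (exp |t|)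
    (ae_of_all _ fun ω => by
      rw [norm_of_nonneg (exp_pos _).le, exp_le_exp]
      calc t * edgeInfluence β (f ω) ≤ |t| * edgeInfluence β (f ω) :=
            mul_le_mul_of_nonneg_right (le_abs_self t) (edgeInfluence_nonneg β _)
        _ ≤ |t| := mul_le_of_le_one_right (abs_nonneg t) (edgeInfluence_le_one β _))

end EdgeInfluenceIntegrability

theorem mgf_edgeInfluence_sub_le {p β t A : ℝ} (hp0 : 0 ≤ p) (hp1 : p ≤ 1) (ht : 0 ≤ t)
    (hA : t * |β| ≤ A) (hA8 : A ≤ 1 / 8) :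
    mgf (edgeInfluence β) ((bernoulliBool p).prod (gaussianReal 0 1)) t - 1
        - t * ∫ q, edgeInfluence β q ∂(bernoulliBool p).prod (gaussianReal 0 1)
      ≤ p * (4 * A ^ 2) := by
  simp only [mgf]
  rw [integral_bernoulliBool_prod hp0 hp1 (g := fun q => exp (t * edgeInfluence β q))
      (integrable_exp_mul_edgeInfluence_comp measurable_id β t),
    integral_bernoulliBool_prod hp0 hp1 (g := edgeInfluence β)
      (integrable_edgeInfluence_comp measurable_id β)]
  simp only [edgeInfluence, if_true, Bool.false_eq_true, if_false, mul_zero, exp_zero,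
    integral_const, probReal_univ, one_smul]
  linarith [mul_le_mul_of_nonneg_left (integral_exp_mul_influence_sub_le ht hA hA8) hp0]

theorem eaMeasure_aggInfluence_ge_le {n : ℕ} {d β t A : ℝ} (hd0 : 0 ≤ d) (hdn : d ≤ n)
    (ht : 0 ≤ t) (hA : t * |β| ≤ A) (hA8 : A ≤ 1 / 8) (u : Fin n) (a : ℝ) :
    (eaMeasure n d).real {ω |
        (∫ ω', aggInfluence (graphOf ω'.1) β (coupOf ω'.2) u ∂eaMeasure n d) + a ≤
          aggInfluence (graphOf ω.1) β (coupOf ω.2) u}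
      ≤ exp (4 * A ^ 2 * d - t * a) := by
  set P := (bernoulliBool (d / n)).prod (gaussianReal 0 1)
  set Y : Fin n → (Sym2 (Fin n) → Bool) × (Sym2 (Fin n) → ℝ) → ℝ :=
    fun z ω => edgeInfluence β (ω.1 s(u, z), ω.2 s(u, z))
  have hY : ∀ z, Measurable fun ω : (Sym2 (Fin n) → Bool) × (Sym2 (Fin n) → ℝ) =>
      (ω.1 s(u, z), ω.2 s(u, z)) := fun z => by fun_prop
  have hind : iIndepFun Y (eaMeasure n d) :=
    (iIndepFun_pairEval.precomp fun _ _ h => Sym2.congr_right.1 h).comp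
      (fun _ => edgeInfluence β) fun _ => measurable_edgeInfluence β
  have hlaw : ∀ z, IdentDistrib (Y z) (edgeInfluence β) (eaMeasure n d) P := fun z =>
    IdentDistrib.comp ⟨(hY z).aemeasurable, aemeasurable_id,
      (measurePreserving_pairEval s(u, z)).map_eq.trans Measure.map_id.symm⟩
      (measurable_edgeInfluence β)
  have hp0 : 0 ≤ d / n := by positivity
  have hp1 : d / n ≤ 1 := div_le_one_of_le₀ hdn (Nat.cast_nonneg n)
  have hterm : ∀ z, mgf (Y z) (eaMeasure n d) t - 1 - t * (eaMeasure n d)[Y z]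
      ≤ d / n * (4 * A ^ 2) := fun z => by
    rw [mgf_congr_of_identDistrib _ _ (hlaw z), (hlaw z).integral_eq]
    exact mgf_edgeInfluence_sub_le hp0 hp1 ht hA hA8
  have hsum : ∑ z ∈ Finset.univ.erase u,
      (mgf (Y z) (eaMeasure n d) t - 1 - t * (eaMeasure n d)[Y z]) ≤ 4 * A ^ 2 * d :=
    calc _ ≤ ∑ _z ∈ Finset.univ.erase u, d / n * (4 * A ^ 2) := Finset.sum_le_sum fun z _ => hterm z
      _ ≤ n * (d / n * (4 * A ^ 2)) := by
          rw [Finset.sum_const, nsmul_eq_mul]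
          gcongr
          exact_mod_cast (Finset.card_le_univ _).trans_eq (Fintype.card_fin n)
      _ = 4 * A ^ 2 * d := by
          field_simp [(Nat.cast_pos.2 u.pos).ne']
  have hX : ∀ ω : (Sym2 (Fin n) → Bool) × (Sym2 (Fin n) → ℝ),
      aggInfluence (graphOf ω.1) β (coupOf ω.2) u = (∑ z ∈ Finset.univ.erase u, Y z) ω :=
    fun ω => by rw [Finset.sum_apply]; exact aggInfluence_graphOf ω.1 ω.2 β u
  simp_rw [hX]
  refine (measureReal_sum_ge_le_exp hind (fun z => (measurable_edgeInfluence β).comp (hY z))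
    (fun z => integrable_edgeInfluence_comp (hY z) β) ht
    (fun z => integrable_exp_mul_edgeInfluence_comp (hY z) β t) _ a).trans ?_
  exact exp_le_exp.2 (by linarith)

theorem exists_four_mul_sq_sub_mul_le {b : ℝ} (hb : 0 ≤ b) :
    ∃ A, 0 ≤ A ∧ A ≤ 1 / 8 ∧ 4 * A ^ 2 - A * b ≤ -min (b ^ 2 / 16) (1 / 16) := by
  rcases le_total b 1 with hb1 | hb1
  · refine ⟨b / 8, by positivity, by linarith, ?_⟩
    nlinarith [min_le_left (b ^ 2 / 16) (1 / 16)]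
  · refine ⟨1 / 8, by norm_num, le_rfl, ?_⟩
    nlinarith [min_le_right (b ^ 2 / 16) (1 / 16)]

theorem pow_four_div_le_min {ε : ℝ} (hε0 : 0 < ε) (hε1 : ε < 1) :
    ε ^ 4 / (8 * π) ≤ min ((ε / (2 * ((1 - ε) * √(2 * π)))) ^ 2 / 16) (1 / 16) := by
  have hr : √(2 * π) ^ 2 = 2 * π := sq_sqrt (by positivity)
  have hγ : 0 < 1 - ε := by linarith
  refine le_min ?_ ?_
  · rw [div_pow, mul_pow, mul_pow, hr, div_div, div_le_div_iff₀ (by positivity) (by positivity)]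
    have hquarter : ε * (1 - ε) ≤ 1 / 4 := by nlinarith [sq_nonneg (2 * ε - 1)]
    have h16 : 16 * (ε * (1 - ε)) ^ 2 ≤ 1 := by nlinarith [mul_pos hε0 hγ]
    nlinarith [mul_le_mul_of_nonneg_left h16 (by positivity : 0 ≤ ε ^ 2 * (8 * π))]
  · rw [div_le_div_iff₀ (by positivity) (by norm_num)]
    nlinarith [pi_gt_three, pow_le_one₀ hε0.le hε1.le (n := 4)]

/-- Tail bound for the aggregate influence of a fixed vertex of the
Edwards–Anderson model on `G(n,d/n)`. -/
theorem aggInfluence_tail_bound (ε : ℝ) (hε : 0 < ε) :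
    ∃ d₀ : ℝ, 1 ≤ d₀ ∧ ∀ d : ℝ, d₀ ≤ d → ∀ β : ℝ, 0 < β → β ≤ (1 - ε) * betaC d →
      ∃ n₀ : ℕ, ∀ n : ℕ, n₀ ≤ n → ∀ u : Fin n,
        eaMeasure n d {ω |
            (∫ ω', aggInfluence (graphOf ω'.1) β (coupOf ω'.2) u ∂(eaMeasure n d)) + ε / 2 ≤
              aggInfluence (graphOf ω.1) β (coupOf ω.2) u} ≤
          ENNReal.ofReal (Real.exp (-(ε ^ 4 / (8 * Real.pi)) * d)) := by
  refine ⟨1, le_rfl, fun d hd β hβ hβc => ⟨⌈d⌉₊, fun n hn u => ?_⟩⟩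
  have hd0 : 0 < d := one_pos.trans_le hd
  have hβc0 : 0 < (1 - ε) * betaC d := hβ.trans_le hβc
  have hε1 : ε < 1 := by
    by_contra! h
    exact hβc0.not_ge (mul_nonpos_of_nonpos_of_nonneg (by linarith) (by unfold betaC; positivity))
  set b := ε / (2 * ((1 - ε) * √(2 * π)))
  obtain ⟨A, hA0, hA8, hAb⟩ := exists_four_mul_sq_sub_mul_le (b := b) (by positivity)
  set t := A / ((1 - ε) * betaC d)
  have htβ : t * |β| ≤ A := by
    rw [abs_of_pos hβ, div_mul_eq_mul_div, div_le_iff₀ hβc0]; gcongr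
  have htε : t * (ε / 2) = d * (A * b) := by
    unfold t b betaC; field_simp
  have hbound := eaMeasure_aggInfluence_ge_le hd0.le ((Nat.le_ceil d).trans (by exact_mod_cast hn))
    (by positivity) htβ hA8 u (ε / 2)
  rw [← ofReal_measureReal]
  refine ENNReal.ofReal_le_ofReal (hbound.trans (exp_le_exp.2 ?_))
  calc 4 * A ^ 2 * d - t * (ε / 2) = d * (4 * A ^ 2 - A * b) := by rw [htε]; ring
    _ ≤ d * -(ε ^ 4 / (8 * π)) := by
        gcongr; linarith [pow_four_div_le_min hε hε1]
    _ = -(ε ^ 4 / (8 * π)) * d := by ring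

end EA

end
end

section
/- Let N > 0 be an integer, σ ≥ 0, and let X_1,…,X_N be i.i.d. Gaussian random variables with mean 0 and variance σ². Set X = ∑_{i=1}^{N} |X_i|. Then for every δ ≥ 0, Pr[X > (1+δ)·E[X]] ≤ exp(−N·δ²/π). -/
/-!
The variables `|X_i| - E|X_i|` have a one-sided sub-Gaussian moment generating function with
variance proxy `σ²`: for `t ≥ 0`, completing the square gives
`E[exp (t |Z|)] = 2 exp (σ² t² / 2) P(Z > -σ² t)`, and `P(Z > -σ² t) ≤ 1/2 + σ² t · φ(0)`
where `φ` is the density of `Z`, so that `E[exp (t |Z|)] ≤ exp (σ² t² / 2) (1 + t E|Z|)`.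
The Chernoff bound for the independent sum, at the optimal `t = δ E|X_1| / σ²`, then gives
`exp (-N δ² (E|X_1|)² / (2 σ²)) = exp (-N δ² / π)`.
-/

open MeasureTheory ProbabilityTheory Real Set Filter
open scoped NNReal

lemma two_div_sqrt_two_mul_pi : 2 / √(2 * π) = √(2 / π) := by
  rw [div_eq_iff (by positivity), ← sqrt_mul (by positivity),
    show 2 / π * (2 * π) = 2 ^ 2 by field_simp, sqrt_sq zero_le_two]

lemma setIntegral_Ioi_comp_sub_const {E : Type*} [NormedAddCommGroup E] [NormedSpace ℝ E]
    (f : ℝ → E) (a c : ℝ) : ∫ x in Ioi a, f (x - c) = ∫ x in Ioi (a - c), f x := by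
  have h := (measurePreserving_sub_right volume c).setIntegral_preimage_emb
    (measurableEmbedding_subRight c) f (Ioi (a - c))
  rwa [preimage_sub_const_Ioi, sub_add_cancel] at h

lemma integral_Ioi_mul_exp_neg_sq_div_two : ∫ x in Ioi (0 : ℝ), x * exp (-x ^ 2 / 2) = 1 := by
  have hderiv (x : ℝ) (_ : x ∈ Ici 0) :
      HasDerivAt (fun x => -exp (-x ^ 2 / 2)) (x * exp (-x ^ 2 / 2)) x :=
    (((hasDerivAt_pow 2 x).fun_neg.div_const 2).exp.fun_neg).congr_deriv (by push_cast; ring)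
  have hlim : Tendsto (fun x : ℝ => -exp (-x ^ 2 / 2)) atTop (nhds (-0)) := by
    refine (tendsto_exp_atBot.comp ?_).neg
    simp_rw [neg_div]
    exact tendsto_neg_atTop_atBot.comp ((tendsto_pow_atTop two_ne_zero).atTop_div_const two_pos)
  have hint : IntegrableOn (fun x : ℝ => x * exp (-x ^ 2 / 2)) (Ioi 0) := by
    simpa [neg_div, div_eq_inv_mul] using
      (integrable_mul_exp_neg_mul_sq (b := 1 / 2) (by norm_num)).integrableOn
  rw [integral_Ioi_of_hasDerivAt_of_tendsto' hderiv hint hlim]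
  simp

lemma MeasureTheory.Measure.pi_dirac {ι : Type*} [Fintype ι] {α : ι → Type*}
    [∀ i, MeasurableSpace (α i)] (x : ∀ i, α i) :
    Measure.pi (fun i => Measure.dirac (x i)) = Measure.dirac x := by
  refine Measure.pi_eq fun s hs => ?_
  simp_rw [Measure.dirac_apply' _ (MeasurableSet.univ_pi hs), Measure.dirac_apply' _ (hs _)]
  by_cases h : ∀ i, x i ∈ s i
  · simp [indicator_of_mem, h, mem_univ_pi.2 h]
  · obtain ⟨i, hi⟩ := not_forall.1 h
    rw [indicator_of_notMem (fun hx => hi (mem_univ_pi.1 hx i)),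
      Finset.prod_eq_zero (Finset.mem_univ i) (indicator_of_notMem hi _)]

/-- Unlike `HasSubgaussianMGF.measure_sum_ge_le_of_iIndepFun`, only the moment generating
functions at `t ≥ 0` are controlled. If `s.card * c = 0`, the bound is `exp 0 = 1`. -/
lemma measureReal_sum_ge_le_of_iIndepFun_of_mgf_le {ι Ω : Type*} {mΩ : MeasurableSpace Ω}
    {μ : Measure Ω} {X : ι → Ω → ℝ} (h_indep : iIndepFun X μ)
    (h_meas : ∀ i, Measurable (X i)) {s : Finset ι} {c : ℝ≥0}
    (h_int : ∀ i ∈ s, ∀ t, 0 ≤ t → Integrable (fun ω => exp (t * X i ω)) μ)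
    (h_mgf : ∀ i ∈ s, ∀ t, 0 ≤ t → mgf (X i) μ t ≤ exp (c * t ^ 2 / 2))
    {ε : ℝ} (hε : 0 ≤ ε) :
    μ.real {ω | ε ≤ ∑ i ∈ s, X i ω} ≤ exp (-ε ^ 2 / (2 * s.card * c)) := by
  have := h_indep.isProbabilityMeasure
  set t := ε / (s.card * c)
  have ht : 0 ≤ t := by positivity
  have h_sum : (fun ω => ∑ i ∈ s, X i ω) = ∑ i ∈ s, X i := by ext; simp
  calc μ.real {ω | ε ≤ ∑ i ∈ s, X i ω}
      ≤ exp (-t * ε) * mgf (fun ω => ∑ i ∈ s, X i ω) μ t := by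
        refine measure_ge_le_exp_mul_mgf ε ht ?_
        simpa [h_sum] using h_indep.integrable_exp_mul_sum h_meas fun i hi => h_int i hi t ht
    _ = exp (-t * ε) * ∏ i ∈ s, mgf (X i) μ t := by rw [h_sum, h_indep.mgf_sum h_meas]
    _ ≤ exp (-t * ε) * ∏ _i ∈ s, exp (c * t ^ 2 / 2) := by
        gcongr with i hi
        · exact fun _ _ => mgf_nonneg
        · exact h_mgf i hi t ht
    _ = exp (-ε ^ 2 / (2 * s.card * c)) := by
        rw [Finset.prod_const, ← exp_nat_mul, ← exp_add]
        congr 1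
        rcases eq_or_ne ((s.card : ℝ) * c) 0 with h | h
        · simp [t, h, mul_assoc]
        · simp only [t]
          field_simp
          ring

section Product

variable {ι α : Type*} [Fintype ι] {mα : MeasurableSpace α} (ν : Measure α)
  [IsProbabilityMeasure ν]

lemma integral_sum_comp_eval_pi {f : α → ℝ} (hf : Integrable f ν) :
    ∫ x, ∑ i, f (x i) ∂Measure.pi (fun _ : ι => ν)
      = Fintype.card ι * ∫ x, f x ∂ν := by
  rw [integral_finsetSum _ fun i _ => integrable_comp_eval hf, Finset.sum_congr rfl fun i _ =>
    integral_comp_eval (μ := fun _ : ι => ν) (i := i) hf.aestronglyMeasurable]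
  simp

lemma measureReal_pi_sum_ge_le_of_mgf_le {f : α → ℝ} (hf : Measurable f) {c : ℝ≥0}
    (h_int : ∀ t, 0 ≤ t → Integrable (fun x => exp (t * f x)) ν)
    (h_mgf : ∀ t, 0 ≤ t → mgf f ν t ≤ exp (c * t ^ 2 / 2)) {ε : ℝ} (hε : 0 ≤ ε) :
    (Measure.pi fun _ : ι => ν).real {x | ε ≤ ∑ i, f (x i)}
      ≤ exp (-ε ^ 2 / (2 * Fintype.card ι * c)) := by
  have h_mgf_pi (i : ι) (t : ℝ) (ht : 0 ≤ t) :
      mgf (fun x => f (x i)) (Measure.pi fun _ : ι => ν) t ≤ exp (c * t ^ 2 / 2) := by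
    rw [mgf, integral_comp_eval (μ := fun _ : ι => ν) (f := fun y => exp (t * f y))
      (by fun_prop)]
    exact h_mgf t ht
  simpa using measureReal_sum_ge_le_of_iIndepFun_of_mgf_le (s := Finset.univ)
    (iIndepFun_pi fun _ => hf.aemeasurable) (fun i => hf.comp (measurable_pi_apply i))
    (fun i _ t ht => integrable_comp_eval (μ := fun _ : ι => ν) (i := i) (h_int t ht))
    (fun i _ => h_mgf_pi i) hε

end Product

lemma gaussianPDFReal_zero_one (x : ℝ) :
    gaussianPDFReal 0 1 x = (√(2 * π))⁻¹ * exp (-x ^ 2 / 2) := by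
  simp [gaussianPDFReal]

lemma gaussianPDFReal_zero_one_abs (x : ℝ) :
    gaussianPDFReal 0 1 |x| = gaussianPDFReal 0 1 x := by
  simp only [gaussianPDFReal_zero_one, sq_abs]

lemma gaussianPDFReal_zero_one_le (x : ℝ) : gaussianPDFReal 0 1 x ≤ (√(2 * π))⁻¹ := by
  rw [gaussianPDFReal_zero_one]
  refine mul_le_of_le_one_right (by positivity) (exp_le_one_iff.2 ?_)
  nlinarith [sq_nonneg x]

lemma exp_mul_mul_gaussianPDFReal (t x : ℝ) :
    exp (t * x) * gaussianPDFReal 0 1 x = exp (t ^ 2 / 2) * gaussianPDFReal t 1 x := by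
  simp only [gaussianPDFReal, NNReal.coe_one, mul_one, sub_zero]
  rw [mul_left_comm, ← exp_add, mul_left_comm, ← exp_add]
  ring_nf

lemma setIntegral_Ioi_gaussianPDFReal_zero_one :
    ∫ x in Ioi 0, gaussianPDFReal 0 1 x = 1 / 2 := by
  have h : ∀ x : ℝ, -x ^ 2 / 2 = -(1 / 2) * x ^ 2 := fun x => by ring
  simp_rw [gaussianPDFReal_zero_one, h]
  rw [integral_const_mul, integral_gaussian_Ioi, show π / (1 / 2) = 2 * π by ring]
  field_simp

lemma setIntegral_Ioi_gaussianPDFReal_le {t : ℝ} (ht : 0 ≤ t) :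
    ∫ x in Ioi 0, gaussianPDFReal t 1 x ≤ 1 / 2 + t / √(2 * π) := by
  have hφ : Integrable (gaussianPDFReal 0 1) := integrable_gaussianPDFReal 0 1
  have hshift : ∀ x, gaussianPDFReal t 1 x = gaussianPDFReal 0 1 (x - t) := fun x => by
    rw [gaussianPDFReal_sub, zero_add]
  have hcenter : ∫ x in Ioc (-t) 0, gaussianPDFReal 0 1 x ≤ t / √(2 * π) :=
    calc ∫ x in Ioc (-t) 0, gaussianPDFReal 0 1 x = ∫ x in (-t)..0, gaussianPDFReal 0 1 x :=
          (intervalIntegral.integral_of_le (by linarith)).symm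
      _ ≤ ∫ _ in (-t)..0, (√(2 * π))⁻¹ :=
          intervalIntegral.integral_mono_on (by linarith) hφ.intervalIntegrable
            intervalIntegrable_const fun x _ => gaussianPDFReal_zero_one_le x
      _ = t / √(2 * π) := by
          rw [intervalIntegral.integral_const, smul_eq_mul, zero_sub, neg_neg, div_eq_mul_inv]
  calc ∫ x in Ioi 0, gaussianPDFReal t 1 x
      = (∫ x in Ioc (-t) 0, gaussianPDFReal 0 1 x) + ∫ x in Ioi 0, gaussianPDFReal 0 1 x := by
        simp_rw [hshift]
        rw [setIntegral_Ioi_comp_sub_const, zero_sub,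
          ← Ioc_union_Ioi_eq_Ioi (show -t ≤ 0 by linarith),
          setIntegral_union Ioc_disjoint_Ioi_same measurableSet_Ioi hφ.integrableOn
            hφ.integrableOn]
    _ ≤ 1 / 2 + t / √(2 * π) := by
        rw [setIntegral_Ioi_gaussianPDFReal_zero_one]
        linarith

lemma integral_abs_gaussianReal_zero_one : ∫ x, |x| ∂gaussianReal 0 1 = √(2 / π) :=
  calc ∫ x, |x| ∂gaussianReal 0 1
      = ∫ x, |x| * gaussianPDFReal 0 1 |x| := by
        rw [integral_gaussianReal_eq_integral_smul one_ne_zero]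
        simp_rw [smul_eq_mul, gaussianPDFReal_zero_one_abs, mul_comm]
    _ = 2 * ∫ x in Ioi 0, x * gaussianPDFReal 0 1 x :=
        integral_comp_abs (f := fun x => x * gaussianPDFReal 0 1 x)
    _ = √(2 / π) := by
        simp_rw [gaussianPDFReal_zero_one, mul_left_comm _ (√(2 * π))⁻¹]
        rw [integral_const_mul, integral_Ioi_mul_exp_neg_sq_div_two, ← two_div_sqrt_two_mul_pi]
        ring

lemma integral_exp_mul_abs_gaussianReal_zero_one_le {t : ℝ} (ht : 0 ≤ t) :
    ∫ x, exp (t * |x|) ∂gaussianReal 0 1 ≤ exp (t * √(2 / π) + t ^ 2 / 2) :=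
  calc ∫ x, exp (t * |x|) ∂gaussianReal 0 1
      = ∫ x, exp (t * |x|) * gaussianPDFReal 0 1 |x| := by
        rw [integral_gaussianReal_eq_integral_smul one_ne_zero]
        simp_rw [smul_eq_mul, gaussianPDFReal_zero_one_abs, mul_comm]
    _ = 2 * ∫ x in Ioi 0, exp (t * x) * gaussianPDFReal 0 1 x :=
        integral_comp_abs (f := fun x => exp (t * x) * gaussianPDFReal 0 1 x)
    _ = 2 * exp (t ^ 2 / 2) * ∫ x in Ioi 0, gaussianPDFReal t 1 x := by
        simp_rw [exp_mul_mul_gaussianPDFReal, integral_const_mul]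
        ring
    _ ≤ 2 * exp (t ^ 2 / 2) * (1 / 2 + t / √(2 * π)) := by
        gcongr
        exact setIntegral_Ioi_gaussianPDFReal_le ht
    _ = exp (t ^ 2 / 2) * (t * √(2 / π) + 1) := by
        rw [← two_div_sqrt_two_mul_pi]
        ring
    _ ≤ exp (t ^ 2 / 2) * exp (t * √(2 / π)) := by
        gcongr
        exact add_one_le_exp _
    _ = exp (t * √(2 / π) + t ^ 2 / 2) := by rw [← exp_add, add_comm]

lemma gaussianReal_zero_sq_eq_map (σ : ℝ≥0) :
    gaussianReal 0 (σ ^ 2) = (gaussianReal 0 1).map fun x => (σ : ℝ) * x := by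
  rw [gaussianReal_map_const_mul, mul_zero]
  congr 1
  ext
  simp

lemma integral_abs_gaussianReal (σ : ℝ≥0) :
    ∫ x, |x| ∂gaussianReal 0 (σ ^ 2) = σ * √(2 / π) := by
  rw [gaussianReal_zero_sq_eq_map, integral_map (by fun_prop) (by fun_prop)]
  simp_rw [abs_mul, NNReal.abs_eq]
  rw [integral_const_mul, integral_abs_gaussianReal_zero_one]

lemma integrable_exp_mul_abs_gaussianReal (μ : ℝ) (v : ℝ≥0) (t : ℝ) :
    Integrable (fun x => exp (t * |x|)) (gaussianReal μ v) := by
  refine ((integrable_exp_mul_gaussianReal t).add (integrable_exp_mul_gaussianReal (-t))).mono'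
    (by fun_prop) (ae_of_all _ fun x => ?_)
  rw [norm_of_nonneg (exp_pos _).le, Pi.add_apply]
  rcases abs_cases x with ⟨hx, _⟩ | ⟨hx, _⟩ <;> rw [hx]
  · linarith [exp_pos (-t * x)]
  · rw [show t * -x = -t * x by ring]
    linarith [exp_pos (t * x)]

lemma mgf_abs_sub_gaussianReal_le (σ : ℝ≥0) {t : ℝ} (ht : 0 ≤ t) :
    mgf (fun x => |x| - σ * √(2 / π)) (gaussianReal 0 (σ ^ 2)) t
      ≤ exp (σ ^ 2 * t ^ 2 / 2) := by
  have habs : mgf (fun x => |x|) (gaussianReal 0 (σ ^ 2)) t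
      ≤ exp (t * σ * √(2 / π) + (t * σ) ^ 2 / 2) := by
    rw [mgf, gaussianReal_zero_sq_eq_map, integral_map (by fun_prop) (by fun_prop)]
    simp_rw [abs_mul, NNReal.abs_eq, ← mul_assoc]
    exact integral_exp_mul_abs_gaussianReal_zero_one_le (by positivity)
  simp_rw [sub_eq_add_neg]
  calc mgf (fun x => |x| + -(σ * √(2 / π))) (gaussianReal 0 (σ ^ 2)) t
      = mgf (fun x => |x|) (gaussianReal 0 (σ ^ 2)) t * exp (t * -(σ * √(2 / π))) :=
        mgf_add_const _
    _ ≤ exp (t * σ * √(2 / π) + (t * σ) ^ 2 / 2) * exp (t * -(σ * √(2 / π))) := by gcongr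
    _ = exp (σ ^ 2 * t ^ 2 / 2) := by rw [← exp_add]; ring_nf

lemma measureReal_pi_sum_abs_sub_ge_le (ι : Type*) [Fintype ι] (σ : ℝ≥0) {ε : ℝ}
    (hε : 0 ≤ ε) :
    (Measure.pi fun _ : ι => gaussianReal 0 (σ ^ 2)).real
        {x | ε ≤ ∑ i, (|x i| - σ * √(2 / π))}
      ≤ exp (-ε ^ 2 / (2 * Fintype.card ι * σ ^ 2)) := by
  have h_int (t : ℝ) :
      Integrable (fun x => exp (t * (|x| - σ * √(2 / π)))) (gaussianReal 0 (σ ^ 2)) := by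
    simpa [mul_sub, exp_sub] using
      (integrable_exp_mul_abs_gaussianReal 0 (σ ^ 2) t).div_const (exp (t * (σ * √(2 / π))))
  have h := measureReal_pi_sum_ge_le_of_mgf_le (ι := ι) _ (by fun_prop) (c := σ ^ 2)
    (fun t _ => h_int t) (fun t ht => by exact_mod_cast mgf_abs_sub_gaussianReal_le σ ht) hε
  rwa [NNReal.coe_pow] at h

/-- Let `X_1, …, X_N` be i.i.d. centred Gaussians with variance `σ²` and
`X = ∑ |X_i|`. Then for every `δ ≥ 0`,
`Pr[X > (1+δ)·E[X]] ≤ exp(−N·δ²/π)`. -/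
theorem half_normal_sum_tail (N : ℕ) (hN : 0 < N) (σ : NNReal) (δ : ℝ) (hδ : 0 ≤ δ) :
    (Measure.pi fun _ : Fin N => gaussianReal 0 (σ ^ 2)) {x |
        (1 + δ) *
            (∫ y, (∑ i, |y i|) ∂(Measure.pi fun _ : Fin N => gaussianReal 0 (σ ^ 2))) <
          ∑ i, |x i|} ≤
      ENNReal.ofReal (Real.exp (-((N : ℝ) * δ ^ 2 / Real.pi))) := by
  -- For `σ = 0` the law is a Dirac mass, and the Chernoff exponent below would divide by zero.
  rcases eq_or_ne σ 0 with rfl | hσ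
  · have hP : (Measure.pi fun _ : Fin N => Measure.dirac (0 : ℝ)) = Measure.dirac 0 :=
      Measure.pi_dirac 0
    simp [hP]
  set P := Measure.pi fun _ : Fin N => gaussianReal 0 (σ ^ 2)
  set m := (σ : ℝ) * √(2 / π)
  have hmean : ∫ y, ∑ i, |y i| ∂P = N * m := by
    rw [integral_sum_comp_eval_pi (f := fun x => |x|) _
      ((memLp_id_gaussianReal 1).integrable le_rfl).abs, integral_abs_gaussianReal,
      Fintype.card_fin]
  have hexponent :
      -(N * δ * m) ^ 2 / (2 * Fintype.card (Fin N) * σ ^ 2) = -(N * δ ^ 2 / π) := by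
    have hN' : (N : ℝ) ≠ 0 := Nat.cast_ne_zero.2 hN.ne'
    have hσ' : (σ : ℝ) ≠ 0 := NNReal.coe_ne_zero.2 hσ
    have hm : m ^ 2 = 2 * σ ^ 2 / π := by
      rw [mul_pow, sq_sqrt (by positivity)]
      ring
    rw [Fintype.card_fin, mul_pow, mul_pow, hm]
    field_simp
  rw [hmean]
  calc P {x | (1 + δ) * (N * m) < ∑ i, |x i|}
      ≤ P {x | N * δ * m ≤ ∑ i, (|x i| - m)} := measure_mono fun x hx => by
        simp only [mem_ofPred_eq, Finset.sum_sub_distrib, Finset.sum_const, Finset.card_univ,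
          Fintype.card_fin, nsmul_eq_mul] at hx ⊢
        linarith
    _ = ENNReal.ofReal (P.real {x | N * δ * m ≤ ∑ i, (|x i| - m)}) :=
        (ofReal_measureReal (measure_ne_top _ _)).symm
    _ ≤ ENNReal.ofReal (exp (-(N * δ ^ 2 / π))) := by
        gcongr
        exact (measureReal_pi_sum_abs_sub_ge_le (Fin N) σ (by positivity)).trans_eq
          (by rw [hexponent])
end
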